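/- Let L, R, K ∈ ℕ with R + K ≤ L. Let v₁,…,v_R ∈ ℂ satisfy v_j ≠ ±i for all j, v_j − v_k + 2i ≠ 0 and v_j − v_k − 2i ≠ 0 for all j ≠ k, and the Bethe ansatz equations ((v_j+i)/(v_j−i))^L = ∏_{ℓ≠j} (v_j − v_ℓ + 2i)/(v_j − v_ℓ − 2i) for j = 1,…,R. Let δ₁,…,δ_K ∈ ℂ satisfy δ_j − δ_k + 2i ≠ 0 for all 1 ≤ j < k ≤ K, and set C_K = Σ_{Q ∈ S_K} A_K(Q)[δ₁,…,δ_K]. Then for every S ⊆ Fin L, as Λ → +∞ along the reals, the coefficient G_{R+K}[v₁,…,v_R, Λ+δ₁,…,Λ+δ_K](S) of the formal Bethe state (well-defined for all sufficiently large Λ) converges to C_K · (1/K!) · ((S⁻)^K G_R[v₁,…,v_R])(S); i.e., the limit of the formal Bethe state with K additional rapidities of center Λ sent to infinity is C_K times the non-regular descendant eigenstate (1/K!)(S⁻)^K applied to the regular Bethe state (Theorem III.1). -/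

import Mathlib

open Finset

/-- The total spin-lowering operator `S⁻` acting on coefficient functions of a
spin-1/2 chain of `L` sites: `(S⁻ g)(S) = Σ_{x ∈ S} g(S \ {x})`. -/
noncomputable def lowerOp (L : ℕ) (g : Finset (Fin L) → ℂ) : Finset (Fin L) → ℂ :=
  fun S => ∑ x ∈ S, g (S.erase x)

/-- The Bethe amplitude `A_M(P)[v₁,…,v_M] = ε(P) · ∏_{j<k} (v_{Pj} − v_{Pk} + 2i)/(v_j − v_k + 2i)`. -/
noncomputable def betheAmp (M : ℕ) (v : Fin M → ℂ) (P : Equiv.Perm (Fin M)) : ℂ :=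
  (Equiv.Perm.sign P : ℤ) *
    ∏ jk ∈ univ.filter (fun jk : Fin M × Fin M => jk.1 < jk.2),
      (v (P jk.1) - v (P jk.2) + 2 * Complex.I) / (v jk.1 - v jk.2 + 2 * Complex.I)

/-- The coefficient function of the formal Bethe state with `M` rapidities `v` on a chain
of `L` sites: on a set `S` of down-spin positions with `|S| = M` it is the Bethe ansatz
wavefunction `f_M` evaluated at the increasing enumeration of the site labels (sites
labelled `1,…,L`), and `0` otherwise. -/
noncomputable def betheState (L M : ℕ) (v : Fin M → ℂ) (S : Finset (Fin L)) : ℂ :=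
  if h : S.card = M then
    ∑ P : Equiv.Perm (Fin M), betheAmp M v P *
      ∏ j : Fin M,
        ((v (P j) + Complex.I) / (v (P j) - Complex.I)) ^ (((S.orderIsoOfFin h j : Fin L) : ℕ) + 1)
  else 0

/-!
Write a permutation of the `R + K` positions of `S` as a shuffle: the set `I` of positions
that carry the finite rapidities `v`, a permutation `σ` of the `v`'s and a permutation `τ`
of the shifted rapidities `Λ + δ`. The Bethe amplitude is the product, over the inversions
of the permutation, of the two-body factors `(z - 2i) / (z + 2i)`, `z` a difference of
rapidities. Inversions inside a block reproduce `A_R(σ)[v] · A_K(τ)[δ]`, since `Λ` cancels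
from differences, while a cross inversion contributes `(v - Λ - δ - 2i) / (v - Λ - δ + 2i)`,
which tends to `1`, as does `e(Λ + δ)`. The limit is therefore `C_K · Σ_I G_R[v](S_I)`,
where `S_I` is the set of sites of `S` at the positions in `I`. Summed over all `R`-subsets
`S_I` of `S`, this is `(1/K!) ((S⁻)^K G_R[v])(S)`, because `K` applications of `S⁻` remove
`K` sites of `S` in all `K!` orders.
-/

open Filter Topology Equiv

noncomputable def scattering (z : ℂ) : ℂ := (z - 2 * Complex.I) / (z + 2 * Complex.I)

theorem betheAmp_eq_prod_scattering {n : ℕ} (w : Fin n → ℂ)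
    (hw : ∀ a b, a < b → w a - w b + 2 * Complex.I ≠ 0) (P : Perm (Fin n)) :
    betheAmp n w P =
      ∏ i, ∏ j, if i < j ∧ P j < P i then scattering (w (P j) - w (P i)) else 1 := by
  set φ : Fin n → Fin n → ℂ := fun a b => w a - w b + 2 * Complex.I
  -- `f` extends `φ` antisymmetrically, so `Perm.prod_Ioi_comp_eq_sign_mul_prod` writes
  -- `sign P` times the denominator of `betheAmp` as a product over the pairs `(P i, P j)`.
  set f : Fin n → Fin n → ℂ := fun a b =>
    if a < b then φ a b else if b < a then -φ b a else 0
  have hf : ∀ a b, f a b = -f b a := by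
    intro a b
    rcases lt_trichotomy a b with h | rfl | h
    · simp [f, h, h.not_gt]
    · simp [f]
    · simp [f, h, h.not_gt]
  have hsign : ∏ i, ∏ j ∈ Ioi i, f (P i) (P j) =
      (Perm.sign P : ℤ) * ∏ i, ∏ j ∈ Ioi i, φ i j := by
    rw [P.prod_Ioi_comp_eq_sign_mul_prod hf]
    exact congrArg _ <| prod_congr rfl fun i _ => prod_congr rfl fun j hj => if_pos (mem_Ioi.1 hj)
  have hsq : ((Perm.sign P : ℤ) : ℂ) * (Perm.sign P : ℤ) = 1 := by
    rw [← Int.cast_mul, ← Units.val_mul, Int.units_mul_self, Units.val_one, Int.cast_one]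
  have hamp : betheAmp n w P = (Perm.sign P : ℤ) *
      ((∏ i, ∏ j ∈ Ioi i, φ (P i) (P j)) / ∏ i, ∏ j ∈ Ioi i, φ i j) := by
    rw [betheAmp, ← prod_div_distrib, prod_filter, Fintype.prod_prod_type]
    simp_rw [← prod_div_distrib, ← filter_lt_eq_Ioi, prod_filter]
    rfl
  have hden : ∏ i, ∏ j ∈ Ioi i, φ i j =
      (Perm.sign P : ℤ) * ∏ i, ∏ j ∈ Ioi i, f (P i) (P j) := by
    rw [hsign, ← mul_assoc, hsq, one_mul]
  rw [hamp, hden, ← mul_div_assoc, mul_div_mul_left _ _ (left_ne_zero_of_mul_eq_one hsq),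
    ← prod_div_distrib]
  refine prod_congr rfl fun i _ => ?_
  rw [← prod_div_distrib, ← filter_lt_eq_Ioi, prod_filter]
  refine prod_congr rfl fun j _ => ?_
  by_cases hij : i < j
  · rcases lt_or_gt_of_ne (P.injective.ne hij.ne) with h | h
    · simpa [hij, h, h.not_gt, f] using hw _ _ h
    · simp only [hij, h, h.not_gt, f, if_true, if_false, true_and, scattering, div_neg,
        ← neg_div]
      congr 1
      ring
  · simp [hij]

theorem betheAmp_const_add {n : ℕ} (c : ℂ) (δ : Fin n → ℂ) (P : Perm (Fin n)) :
    betheAmp n (fun j => c + δ j) P = betheAmp n δ P := by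
  simp only [betheAmp, add_sub_add_left_eq_sub]

noncomputable def rapidityPhase (z : ℂ) : ℂ := (z + Complex.I) / (z - Complex.I)

theorem betheState_of_card_eq {L M : ℕ} (w : Fin M → ℂ) {S : Finset (Fin L)} (h : #S = M) :
    betheState L M w S =
      ∑ P, betheAmp M w P *
        ∏ j, rapidityPhase (w (P j)) ^ ((S.orderEmbOfFin h j : ℕ) + 1) := by
  rw [betheState, dif_pos h]
  simp only [coe_orderIsoOfFin_apply]
  rfl

theorem betheState_of_card_ne {L M : ℕ} (w : Fin M → ℂ) {S : Finset (Fin L)} (h : #S ≠ M) :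
    betheState L M w S = 0 :=
  dif_neg h

theorem betheState_map_orderEmbOfFin {L M R : ℕ} (v : Fin R → ℂ) {S : Finset (Fin L)}
    (hS : #S = M) {I : Finset (Fin M)} (hI : #I = R) :
    betheState L R v (I.map (S.orderEmbOfFin hS).toEmbedding) =
      ∑ σ, betheAmp R v σ * ∏ a,
        rapidityPhase (v (σ a)) ^ ((S.orderEmbOfFin hS (I.orderEmbOfFin hI a) : ℕ) + 1) := by
  have hcard : #(I.map (S.orderEmbOfFin hS).toEmbedding) = R := by rw [card_map, hI]
  have henum := orderEmbOfFin_unique hcard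
    (f := fun a => S.orderEmbOfFin hS (I.orderEmbOfFin hI a))
    (fun a => mem_map_of_mem _ (orderEmbOfFin_mem I hI a))
    ((S.orderEmbOfFin hS).strictMono.comp (I.orderEmbOfFin hI).strictMono)
  rw [betheState_of_card_eq v hcard, ← henum]

theorem lowerOp_iterate_apply (L K : ℕ) (g : Finset (Fin L) → ℂ) (S : Finset (Fin L)) :
    (lowerOp L)^[K] g S = (K.factorial : ℂ) * ∑ U ∈ S.powerset with #U + K = #S, g U := by
  induction K generalizing S with
  | zero =>
    simp only [Function.iterate_zero, id, Nat.factorial_zero, Nat.cast_one, one_mul, add_zero]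
    rw [← powersetCard_eq_filter, powersetCard_self, sum_singleton]
  | succ K ih =>
    have hswap : ∑ x ∈ S, ∑ U ∈ (S.erase x).powerset with #U + K = #(S.erase x), g U =
        ∑ U ∈ S.powerset with #U + (K + 1) = #S, ∑ _x ∈ S \ U, g U := by
      refine sum_comm' ?_
      intro x U
      simp only [mem_filter, mem_powerset, Finset.mem_sdiff, subset_erase]
      constructor
      · rintro ⟨hx, ⟨hUS, hxU⟩, hcard⟩
        rw [card_erase_of_mem hx] at hcard
        have := card_pos.2 ⟨x, hx⟩
        exact ⟨⟨hx, hxU⟩, hUS, by omega⟩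
      · rintro ⟨⟨hx, hxU⟩, hUS, hcard⟩
        rw [card_erase_of_mem hx]
        exact ⟨hx, ⟨hUS, hxU⟩, by omega⟩
    rw [Function.iterate_succ_apply', lowerOp]
    simp_rw [ih]
    rw [← mul_sum, hswap, mul_sum, mul_sum]
    refine sum_congr rfl fun U hU => ?_
    simp only [mem_filter, mem_powerset] at hU
    rw [sum_const, card_sdiff_of_subset hU.1, nsmul_eq_mul, Nat.factorial_succ, Nat.cast_mul,
      show #S - #U = K + 1 by omega]
    push_cast
    ring

theorem sum_powerset_filter_card_eq_sum_map {L R K : ℕ} {M : Type*} [AddCommMonoid M]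
    (g : Finset (Fin L) → M) {S : Finset (Fin L)} (hS : #S = R + K) :
    ∑ U ∈ S.powerset with #U + K = #S, g U =
      ∑ I : {I : Finset (Fin (R + K)) // #I = R},
        g (I.1.map (S.orderEmbOfFin hS).toEmbedding) := by
  have hfilter : {U ∈ S.powerset | #U + K = #S} =
      (powersetCard R univ).map (mapEmbedding (S.orderEmbOfFin hS).toEmbedding).toEmbedding := by
    rw [← powersetCard_map, map_orderEmbOfFin_univ, powersetCard_eq_filter]
    exact filter_congr fun U _ => by omega
  rw [hfilter, sum_map, sum_subtype _ fun I => mem_powersetCard_univ]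
  rfl

section BlockShuffle

variable {m n : ℕ}

theorem castAdd_lt_natAdd (a : Fin m) (b : Fin n) : Fin.castAdd n a < Fin.natAdd m b := by
  rw [Fin.lt_def, Fin.val_castAdd, Fin.val_natAdd]
  omega

noncomputable def blockEquiv (I : {I : Finset (Fin (m + n)) // #I = m}) :
    Fin m ⊕ Fin n ≃ Fin (m + n) :=
  finSumEquivOfFinset I.2 (by rw [card_compl, Fintype.card_fin, I.2, Nat.add_sub_cancel_left])

-- Read as a map from positions to rapidity labels: the `a`-th element of `I` carries label
-- `σ a` of the first block, the `b`-th position outside `I` carries label `τ b` of the second.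
noncomputable def blockShuffle (I : {I : Finset (Fin (m + n)) // #I = m}) (σ : Perm (Fin m))
    (τ : Perm (Fin n)) : Perm (Fin (m + n)) :=
  (blockEquiv I).symm.trans ((Equiv.sumCongr σ τ).trans finSumFinEquiv)

variable (I : {I : Finset (Fin (m + n)) // #I = m}) (σ : Perm (Fin m)) (τ : Perm (Fin n))

@[simp]
theorem blockShuffle_blockEquiv_inl (a : Fin m) :
    blockShuffle I σ τ (blockEquiv I (.inl a)) = Fin.castAdd n (σ a) := by
  simp [blockShuffle]

@[simp]
theorem blockShuffle_blockEquiv_inr (b : Fin n) :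
    blockShuffle I σ τ (blockEquiv I (.inr b)) = Fin.natAdd m (τ b) := by
  simp [blockShuffle]

theorem blockEquiv_inl_lt_inl {a a' : Fin m} :
    blockEquiv I (.inl a) < blockEquiv I (.inl a') ↔ a < a' := by
  simp [blockEquiv]

theorem blockEquiv_inr_lt_inr {b b' : Fin n} :
    blockEquiv I (.inr b) < blockEquiv I (.inr b') ↔ b < b' := by
  simp [blockEquiv]

theorem val_blockShuffle_lt_iff (j : Fin (m + n)) :
    (blockShuffle I σ τ j : ℕ) < m ↔ j ∈ I.1 := by
  obtain ⟨s | s, rfl⟩ := (blockEquiv I).surjective j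
  · rw [blockShuffle_blockEquiv_inl]
    simp [blockEquiv]
  · rw [blockShuffle_blockEquiv_inr]
    simpa [blockEquiv] using Finset.mem_compl.1 (orderEmbOfFin_mem _ _ s)

theorem blockShuffle_injective :
    Function.Injective fun x : {I : Finset (Fin (m + n)) // #I = m} × Perm (Fin m) ×
      Perm (Fin n) => blockShuffle x.1 x.2.1 x.2.2 := by
  rintro ⟨I, σ, τ⟩ ⟨I', σ', τ'⟩ h
  have hI : I = I' := Subtype.ext <| Finset.ext fun j => by
    rw [← val_blockShuffle_lt_iff I σ τ, ← val_blockShuffle_lt_iff I' σ' τ']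
    exact iff_of_eq (congrArg (fun P : Perm (Fin (m + n)) => (P j : ℕ) < m) h)
  subst hI
  have hσ : σ = σ' := Equiv.ext fun a => by
    simpa using DFunLike.congr_fun h (blockEquiv I (.inl a))
  have hτ : τ = τ' := Equiv.ext fun b => by
    simpa using DFunLike.congr_fun h (blockEquiv I (.inr b))
  rw [hσ, hτ]

theorem sum_perm_eq_sum_blockShuffle {M : Type*} [AddCommMonoid M]
    (F : Perm (Fin (m + n)) → M) :
    ∑ P, F P =
      ∑ I : {I : Finset (Fin (m + n)) // #I = m}, ∑ σ, ∑ τ, F (blockShuffle I σ τ) := by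
  have hbij : Function.Bijective fun x : {I : Finset (Fin (m + n)) // #I = m} × Perm (Fin m) ×
      Perm (Fin n) => blockShuffle x.1 x.2.1 x.2.2 := by
    rw [Fintype.bijective_iff_injective_and_card]
    refine ⟨blockShuffle_injective, ?_⟩
    simp only [Fintype.card_prod, Fintype.card_finset_len, Fintype.card_perm, Fintype.card_fin]
    rw [← mul_assoc, Nat.choose_symm_add, Nat.add_choose_mul_factorial_mul_factorial]
  rw [← Fintype.sum_bijective _ hbij _ _ fun _ => rfl]
  simp only [Fintype.sum_prod_type]

theorem prod_blockShuffle {M : Type*} [CommMonoid M] (F : Fin (m + n) → Fin (m + n) → M) :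
    ∏ j, F j (blockShuffle I σ τ j) =
      (∏ a, F (blockEquiv I (.inl a)) (Fin.castAdd n (σ a))) *
        ∏ b, F (blockEquiv I (.inr b)) (Fin.natAdd m (τ b)) := by
  rw [← (blockEquiv I).prod_comp, Fintype.prod_sum_type]
  simp only [blockShuffle_blockEquiv_inl, blockShuffle_blockEquiv_inr]

theorem betheAmp_blockShuffle (w : Fin (m + n) → ℂ)
    (hw : ∀ a b, a < b → w a - w b + 2 * Complex.I ≠ 0) :
    betheAmp (m + n) w (blockShuffle I σ τ) =
      betheAmp m (fun a => w (Fin.castAdd n a)) σ * betheAmp n (fun b => w (Fin.natAdd m b)) τ *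
        ∏ b, ∏ a, if blockEquiv I (.inr b) < blockEquiv I (.inl a) then
          scattering (w (Fin.castAdd n (σ a)) - w (Fin.natAdd m (τ b))) else 1 := by
  rw [betheAmp_eq_prod_scattering w hw,
    betheAmp_eq_prod_scattering _ fun a b h => hw _ _ (Fin.strictMono_castAdd n h),
    betheAmp_eq_prod_scattering _ fun a b h => hw _ _ (Fin.strictMono_natAdd m h),
    ← (blockEquiv I).prod_comp]
  simp_rw [← (blockEquiv I).prod_comp (g := fun j => ite _ _ _)]
  simp only [Fintype.prod_sum_type, blockShuffle_blockEquiv_inl, blockShuffle_blockEquiv_inr,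
    blockEquiv_inl_lt_inl, blockEquiv_inr_lt_inr, (Fin.strictMono_castAdd n).lt_iff_lt,
    Fin.natAdd_lt_natAdd_iff, castAdd_lt_natAdd, (castAdd_lt_natAdd _ _).not_gt, and_true,
    and_false, if_false,
    prod_const_one, prod_mul_distrib]
  ring

end BlockShuffle

theorem tendsto_ofReal_add_div_ofReal_add (a b : ℂ) :
    Tendsto (fun Λ : ℝ => ((Λ : ℂ) + a) / ((Λ : ℂ) + b)) atTop (𝓝 1) := by
  have hinv : Tendsto (fun Λ : ℝ => (Λ : ℂ)⁻¹) atTop (𝓝 0) := by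
    have h := (Complex.continuous_ofReal.tendsto 0).comp tendsto_inv_atTop_zero
    rw [Complex.ofReal_zero] at h
    exact h.congr fun Λ => by simp
  have h := (tendsto_const_nhds (x := (1 : ℂ)).add (hinv.const_mul a)).div
    (tendsto_const_nhds (x := (1 : ℂ)).add (hinv.const_mul b)) (by simp)
  simp only [mul_zero, add_zero, div_one] at h
  refine h.congr' ?_
  filter_upwards [eventually_ne_atTop 0] with Λ hΛ
  have hΛ' : (Λ : ℂ) ≠ 0 := by exact_mod_cast hΛ
  simp only [Pi.div_apply, ← div_eq_mul_inv]
  rw [one_add_div hΛ', one_add_div hΛ', div_div_div_cancel_right₀ hΛ']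

theorem eventually_ofReal_ne (c : ℂ) : ∀ᶠ Λ : ℝ in atTop, (Λ : ℂ) ≠ c := by
  filter_upwards [eventually_ne_atTop c.re] with Λ hΛ h
  exact hΛ (by rw [← h, Complex.ofReal_re])

theorem tendsto_scattering_sub_ofReal_add (c d : ℂ) :
    Tendsto (fun Λ : ℝ => scattering (c - ((Λ : ℂ) + d))) atTop (𝓝 1) := by
  refine (tendsto_ofReal_add_div_ofReal_add (d - c + 2 * Complex.I)
    (d - c - 2 * Complex.I)).congr fun Λ => ?_
  rw [scattering, ← neg_div_neg_eq]
  congr 1 <;> ring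

theorem tendsto_rapidityPhase_ofReal_add (d : ℂ) :
    Tendsto (fun Λ : ℝ => rapidityPhase ((Λ : ℂ) + d)) atTop (𝓝 1) :=
  (tendsto_ofReal_add_div_ofReal_add (d + Complex.I) (d - Complex.I)).congr fun Λ => by
    rw [rapidityPhase, add_assoc, add_sub_assoc]

section Limit

variable {R K : ℕ} {v : Fin R → ℂ} {δ : Fin K → ℂ}

variable (v δ) in
noncomputable def shiftedRapidities (Λ : ℝ) : Fin (R + K) → ℂ :=
  Fin.addCases (motive := fun _ => ℂ) v fun j => (Λ : ℂ) + δ j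

@[simp]
theorem shiftedRapidities_castAdd (Λ : ℝ) (a : Fin R) :
    shiftedRapidities v δ Λ (Fin.castAdd K a) = v a :=
  Fin.addCases_left a

@[simp]
theorem shiftedRapidities_natAdd (Λ : ℝ) (b : Fin K) :
    shiftedRapidities v δ Λ (Fin.natAdd R b) = Λ + δ b :=
  Fin.addCases_right b

theorem eventually_shiftedRapidities_sub_add_ne_zero
    (hv : ∀ j k : Fin R, j ≠ k → v j - v k + 2 * Complex.I ≠ 0)
    (hδ : ∀ j k : Fin K, j < k → δ j - δ k + 2 * Complex.I ≠ 0) :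
    ∀ᶠ Λ : ℝ in atTop, ∀ a b, a < b →
      shiftedRapidities v δ Λ a - shiftedRapidities v δ Λ b + 2 * Complex.I ≠ 0 := by
  simp only [eventually_all]
  intro a b
  refine Fin.addCases (fun a => ?_) (fun a => ?_) a <;>
    refine Fin.addCases (fun b => ?_) (fun b => ?_) b <;> intro hab
  · exact .of_forall fun Λ => by
      simpa using hv a b ((Fin.strictMono_castAdd K).lt_iff_lt.1 hab).ne
  · filter_upwards [eventually_ofReal_ne (v a - δ b + 2 * Complex.I)] with Λ hΛ h
    simp only [shiftedRapidities_castAdd, shiftedRapidities_natAdd] at h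
    exact hΛ (by linear_combination -h)
  · exact absurd hab (castAdd_lt_natAdd b a).not_gt
  · exact .of_forall fun Λ => by
      simpa [add_sub_add_left_eq_sub] using hδ a b ((Fin.natAdd_lt_natAdd_iff R).1 hab)

theorem tendsto_betheAmp_blockShuffle
    (hv : ∀ j k : Fin R, j ≠ k → v j - v k + 2 * Complex.I ≠ 0)
    (hδ : ∀ j k : Fin K, j < k → δ j - δ k + 2 * Complex.I ≠ 0)
    (I : {I : Finset (Fin (R + K)) // #I = R}) (σ : Perm (Fin R)) (τ : Perm (Fin K)) :
    Tendsto (fun Λ : ℝ => betheAmp (R + K) (shiftedRapidities v δ Λ) (blockShuffle I σ τ))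
      atTop (𝓝 (betheAmp R v σ * betheAmp K δ τ)) := by
  have hcross : Tendsto (fun Λ : ℝ => ∏ b, ∏ a,
      if blockEquiv I (.inr b) < blockEquiv I (.inl a) then
        scattering (v (σ a) - ((Λ : ℂ) + δ (τ b))) else 1) atTop (𝓝 1) := by
    have hfactor : ∀ a b, Tendsto (fun Λ : ℝ =>
        if blockEquiv I (.inr b) < blockEquiv I (.inl a) then
          scattering (v (σ a) - ((Λ : ℂ) + δ (τ b))) else 1) atTop (𝓝 1) := fun a b => by
      split_ifs
      · exact tendsto_scattering_sub_ofReal_add _ _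
      · exact tendsto_const_nhds
    simpa using tendsto_finsetProd univ fun b _ => tendsto_finsetProd univ fun a _ => hfactor a b
  simpa using (tendsto_const_nhds.mul hcross).congr' <|
    (eventually_shiftedRapidities_sub_add_ne_zero hv hδ).mono fun Λ hΛ => by
      rw [betheAmp_blockShuffle I σ τ _ hΛ]
      simp only [shiftedRapidities_castAdd, shiftedRapidities_natAdd, betheAmp_const_add]

theorem tendsto_betheAmp_mul_prod_rapidityPhase_blockShuffle
    (hv : ∀ j k : Fin R, j ≠ k → v j - v k + 2 * Complex.I ≠ 0)
    (hδ : ∀ j k : Fin K, j < k → δ j - δ k + 2 * Complex.I ≠ 0)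
    (I : {I : Finset (Fin (R + K)) // #I = R}) (σ : Perm (Fin R)) (τ : Perm (Fin K))
    (x : Fin (R + K) → ℕ) :
    Tendsto (fun Λ : ℝ => betheAmp (R + K) (shiftedRapidities v δ Λ) (blockShuffle I σ τ) *
        ∏ j, rapidityPhase (shiftedRapidities v δ Λ (blockShuffle I σ τ j)) ^ x j)
      atTop (𝓝 (betheAmp R v σ * betheAmp K δ τ *
        ∏ a, rapidityPhase (v (σ a)) ^ x (blockEquiv I (.inl a)))) := by
  refine (tendsto_betheAmp_blockShuffle hv hδ I σ τ).mul ?_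
  refine Tendsto.congr (fun Λ => (prod_blockShuffle I σ τ fun j k =>
    rapidityPhase (shiftedRapidities v δ Λ k) ^ x j).symm) ?_
  simp only [shiftedRapidities_castAdd, shiftedRapidities_natAdd]
  simpa using tendsto_const_nhds.mul (tendsto_finsetProd univ fun b _ =>
    (tendsto_rapidityPhase_ofReal_add (δ (τ b))).pow (x (blockEquiv I (.inr b))))

theorem tendsto_betheState_shiftedRapidities
    (hv : ∀ j k : Fin R, j ≠ k → v j - v k + 2 * Complex.I ≠ 0)
    (hδ : ∀ j k : Fin K, j < k → δ j - δ k + 2 * Complex.I ≠ 0)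
    {L : ℕ} {S : Finset (Fin L)} (hS : #S = R + K) :
    Tendsto (fun Λ : ℝ => betheState L (R + K) (shiftedRapidities v δ Λ) S)
      atTop (𝓝 ((∑ τ, betheAmp K δ τ) * ∑ I : {I : Finset (Fin (R + K)) // #I = R},
        betheState L R v (I.1.map (S.orderEmbOfFin hS).toEmbedding))) := by
  simp only [betheState_of_card_eq _ hS, sum_perm_eq_sum_blockShuffle (m := R) (n := K), mul_sum]
  refine tendsto_finsetSum _ fun I _ => ?_
  simp only [betheState_map_orderEmbOfFin v hS I.2, mul_sum, sum_mul]
  refine tendsto_finsetSum _ fun σ _ => tendsto_finsetSum _ fun τ _ => ?_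
  rw [mul_left_comm, ← mul_assoc]
  exact tendsto_betheAmp_mul_prod_rapidityPhase_blockShuffle hv hδ I σ τ _

end Limit

theorem theorem_III_1_general (L R K : ℕ)
    (v : Fin R → ℂ) (δ : Fin K → ℂ)
    (hv : ∀ j k : Fin R, j ≠ k → v j - v k + 2 * Complex.I ≠ 0)
    (hδ : ∀ j k : Fin K, j < k → δ j - δ k + 2 * Complex.I ≠ 0)
    (S : Finset (Fin L)) :
    Filter.Tendsto
      (fun Λ : ℝ => betheState L (R + K)
        (Fin.addCases (motive := fun _ => ℂ) v (fun j => (Λ : ℂ) + δ j)) S)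
      Filter.atTop
      (nhds ((∑ Q : Equiv.Perm (Fin K), betheAmp K δ Q) *
        ((1 / (Nat.factorial K : ℂ)) * (lowerOp L)^[K] (betheState L R v) S))) := by
  rw [lowerOp_iterate_apply, one_div,
    inv_mul_cancel_left₀ (Nat.cast_ne_zero.2 K.factorial_ne_zero)]
  by_cases hS : #S = R + K
  · rw [sum_powerset_filter_card_eq_sum_map _ hS]
    exact tendsto_betheState_shiftedRapidities hv hδ hS
  · rw [sum_eq_zero fun U hU => betheState_of_card_ne v (by rw [mem_filter] at hU; omega),
      mul_zero]
    simpa only [betheState_of_card_ne _ hS] using tendsto_const_nhds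

/-- Theorem III.1: if `v₁,…,v_R` satisfy the Bethe ansatz equations (a regular Bethe
state) and `δ₁,…,δ_K` are generic, then for every down-spin configuration `S`, the
coefficient of the formal Bethe state with rapidities `v₁,…,v_R, Λ+δ₁,…,Λ+δ_K`
converges, as `Λ → +∞`, to `C_K · (1/K!) · ((S⁻)^K G_R[v])(S)`, i.e. the limit of the
formal Bethe state is `C_K` times the non-regular descendant eigenstate. -/
theorem theorem_III_1 (L R K : ℕ) (hRK : R + K ≤ L)
    (v : Fin R → ℂ) (δ : Fin K → ℂ)
    (hvI : ∀ j, v j ≠ Complex.I) (hvI' : ∀ j, v j ≠ -Complex.I)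
    (hv : ∀ j k : Fin R, j ≠ k → v j - v k + 2 * Complex.I ≠ 0)
    (hv' : ∀ j k : Fin R, j ≠ k → v j - v k - 2 * Complex.I ≠ 0)
    (hBAE : ∀ j : Fin R,
      ((v j + Complex.I) / (v j - Complex.I)) ^ L
        = ∏ l ∈ univ.erase j, (v j - v l + 2 * Complex.I) / (v j - v l - 2 * Complex.I))
    (hδ : ∀ j k : Fin K, j < k → δ j - δ k + 2 * Complex.I ≠ 0)
    (S : Finset (Fin L)) :
    Filter.Tendsto
      (fun Λ : ℝ => betheState L (R + K)
        (Fin.addCases (motive := fun _ => ℂ) v (fun j => (Λ : ℂ) + δ j)) S)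
      Filter.atTop
      (nhds ((∑ Q : Equiv.Perm (Fin K), betheAmp K δ Q) *
        ((1 / (Nat.factorial K : ℂ)) * (lowerOp L)^[K] (betheState L R v) S))) :=
  theorem_III_1_general L R K v δ hv hδ S
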